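/- arXiv:math/0302214 — 6 statements merged into one kernel-verified Lean document; each statement's English description precedes it below -/
import Mathlib

section
/- For every integer k ≥ 2 and all real numbers x, y with y > 0, the k-th power of the matrix r_k(x,y) equals −y^k times the 2×2 identity matrix; in particular r_k(x,y) represents an elliptic element of order k in PSL(2,ℝ), and r_2(x,y)² = −y²·I. -/
/-- The elliptic rotation matrix r_k(x,y). -/
noncomputable def rk (k : ℕ) (x y : ℝ) : Matrix (Fin 2) (Fin 2) ℝ :=
  !![Real.cos (Real.pi / k) * y - Real.sin (Real.pi / k) * x,
     Real.sin (Real.pi / k) * (y ^ 2 + x ^ 2);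
     -Real.sin (Real.pi / k),
     Real.cos (Real.pi / k) * y + Real.sin (Real.pi / k) * x]

/-!
By Cayley–Hamilton, `a = r_k(x,y)` satisfies `a² = 2y cos θ · a − y²` with `θ = π/k`, since its
trace is `2y cos θ` and its determinant is `y²`. For any such `a` the powers obey the Chebyshev
recurrence `sin θ · aⁿ⁺¹ = yⁿ sin((n+1)θ) · a − yⁿ⁺¹ sin(nθ)`; at `n + 1 = k` this reads
`sin θ · aᵏ = −yᵏ sin θ`, and `sin θ ≠ 0` because `0 < θ < π`.
-/

open Real

theorem Matrix.sq_fin_two {R : Type*} [CommRing R] (M : Matrix (Fin 2) (Fin 2) R) :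
    M ^ 2 = M.trace • M - M.det • 1 := by
  ext i j
  fin_cases i <;> fin_cases j <;>
    simp [sq, Matrix.mul_apply, Matrix.trace_fin_two, Matrix.det_fin_two] <;> ring

theorem trace_rk (k : ℕ) (x y : ℝ) : (rk k x y).trace = 2 * y * cos (π / k) := by
  rw [rk, Matrix.trace_fin_two_of]; ring

theorem det_rk (k : ℕ) (x y : ℝ) : (rk k x y).det = y ^ 2 := by
  rw [rk, Matrix.det_fin_two_of]
  linear_combination y ^ 2 * cos_sq_add_sin_sq (π / k)

section Recurrence

variable {A : Type*} [Ring A] [Algebra ℝ A] {a : A} {y θ : ℝ}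

theorem sin_smul_pow_succ_of_sq_eq (ha : a ^ 2 = (2 * y * cos θ) • a - y ^ 2 • 1) (n : ℕ) :
    sin θ • a ^ (n + 1) = (y ^ n * sin ((n + 1) * θ)) • a - (y ^ (n + 1) * sin (n * θ)) • 1 := by
  induction n with
  | zero => simp
  | succ n ih =>
    have hsin : sin ((n + 1 + 1) * θ) = 2 * sin ((n + 1) * θ) * cos θ - sin (n * θ) := by
      rw [show (n + 1 + 1) * θ = (n + 1) * θ + θ by ring, show n * θ = (n + 1) * θ - θ by ring,
        sin_add, sin_sub]
      ring
    rw [pow_succ, ← smul_mul_assoc, ih, sub_mul, smul_mul_assoc, smul_mul_assoc, one_mul, ← sq, ha]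
    push_cast
    rw [hsin]
    match_scalars <;> ring

theorem pow_eq_neg_pow_smul_one_of_sq_eq {k : ℕ} (hk : 2 ≤ k)
    (ha : a ^ 2 = (2 * y * cos (π / k)) • a - y ^ 2 • 1) : a ^ k = (-(y ^ k)) • 1 := by
  obtain ⟨n, rfl⟩ : ∃ n, k = n + 1 := ⟨k - 1, by omega⟩
  set θ := π / (n + 1 : ℕ)
  have hπ : (n + 1) * θ = π := by simp only [θ]; push_cast; field_simp
  have hsin_pos : 0 < sin θ := by
    apply sin_pos_of_pos_of_lt_pi (by positivity)
    exact div_lt_self pi_pos (by exact_mod_cast (by omega : 1 < n + 1))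
  have hsin_n : sin (n * θ) = sin θ := by
    rw [← sin_pi_sub, ← hπ]; ring_nf
  apply smul_right_injective A hsin_pos.ne'
  change sin θ • a ^ (n + 1) = sin θ • (-(y ^ (n + 1)) • (1 : A))
  rw [sin_smul_pow_succ_of_sq_eq ha, hπ, sin_pi, hsin_n, smul_smul]
  match_scalars <;> ring

end Recurrence

theorem rk_sq (k : ℕ) (x y : ℝ) :
    rk k x y ^ 2 = (2 * y * cos (π / k)) • rk k x y - y ^ 2 • 1 := by
  rw [Matrix.sq_fin_two, trace_rk, det_rk]

theorem rk_pow_general (k : ℕ) (hk : 2 ≤ k) (x y : ℝ) :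
    rk k x y ^ k = (-(y ^ k)) • (1 : Matrix (Fin 2) (Fin 2) ℝ) ∧
    rk 2 x y ^ 2 = (-(y ^ 2)) • (1 : Matrix (Fin 2) (Fin 2) ℝ) :=
  ⟨pow_eq_neg_pow_smul_one_of_sq_eq hk (rk_sq k x y),
    pow_eq_neg_pow_smul_one_of_sq_eq le_rfl (rk_sq 2 x y)⟩

/-- For every integer k ≥ 2 and all real x, y with y > 0, the k-th
power of r_k(x,y) equals −y^k times the identity matrix; in particular r_k(x,y)
represents an elliptic element of order k in PSL(2,ℝ), and r_2(x,y)² = −y²·I. -/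
theorem rk_pow (k : ℕ) (hk : 2 ≤ k) (x y : ℝ) (hy : 0 < y) :
    rk k x y ^ k = (-(y ^ k)) • (1 : Matrix (Fin 2) (Fin 2) ℝ) ∧
    rk 2 x y ^ 2 = (-(y ^ 2)) • (1 : Matrix (Fin 2) (Fin 2) ℝ) :=
  rk_pow_general k hk x y
end

section
/- Let a, b be real numbers with a > 0, let Y be a real number with Y² = 4/a² + b², and set x = (2/a + b + Y)/2 and y = (−4/a² + (1 − 2/a + b)·(−b + Y))/2. Let g₁ = r_2(b, 1/√a) = [[−b, 1/a + b²], [−1, b]], g₂ = r_2(x, √y) = [[−x, y + x²], [−1, x]], T = [[1,1],[0,1]], and g₃ = T·g₁·g₂. Then the trace of g₃ is 0, g₃² = −(y/a)·I, and g₁·g₂·g₃·T = −(y/a)·I; hence g₁, g₂, g₃ are elliptic of order 2 in PSL(2,ℝ) and satisfy the relation g₁g₂g₃T = 1 there, so that the group Γ_{2,2,2}(a,b) = ⟨T, g₁, g₂, g₃⟩ realizes the presentation of a group of signature {0, {2,2,2}, 1}. -/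
/-- The order-2 elliptic rotation matrix r_2(x,y) = [[−x, x² + y²], [−1, x]]. -/
def r2 (x y : ℝ) : Matrix (Fin 2) (Fin 2) ℝ := !![-x, x ^ 2 + y ^ 2; -1, x]

/-- Cayley–Hamilton for 2×2 real matrices. -/
lemma fin_two_CH (M : Matrix (Fin 2) (Fin 2) ℝ) :
    M * M = M.trace • M - M.det • (1 : Matrix (Fin 2) (Fin 2) ℝ) := by
  ext i j
  fin_cases i <;> fin_cases j <;>
    simp [Matrix.mul_apply, Fin.sum_univ_two, Matrix.trace_fin_two,
      Matrix.det_fin_two, Matrix.one_apply] <;> ring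

/-- With a > 0, Y² = 4/a² + b², x = (2/a + b + Y)/2,
y = (−4/a² + (1 − 2/a + b)·(−b + Y))/2, g₁ = r_2(b, 1/√a) = [[−b, 1/a + b²], [−1, b]],
g₂ = r_2(x, √y) = [[−x, y + x²], [−1, x]], T = [[1,1],[0,1]], g₃ = T·g₁·g₂:
the trace of g₃ is 0, g₃² = −(y/a)·I, and g₁·g₂·g₃·T = −(y/a)·I.  Hence
g₁, g₂, g₃ are elliptic of order 2 in PSL(2,ℝ) and g₁g₂g₃T = 1 there, so
Γ_{2,2,2}(a,b) = ⟨T, g₁, g₂, g₃⟩ realizes the presentation of signature {0,{2,2,2},1}. -/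
theorem Gamma222_relations (a b Y x y : ℝ) (ha : 0 < a)
    (hY : Y ^ 2 = 4 / a ^ 2 + b ^ 2)
    (hx : x = (2 / a + b + Y) / 2)
    (hy : y = (-(4 / a ^ 2) + (1 - 2 / a + b) * (-b + Y)) / 2)
    (T g₁ g₂ g₃ : Matrix (Fin 2) (Fin 2) ℝ)
    (hT : T = !![1, 1; 0, 1])
    (hg₁ : g₁ = !![-b, 1 / a + b ^ 2; -1, b])
    (hg₂ : g₂ = !![-x, y + x ^ 2; -1, x])
    (hg₃ : g₃ = T * g₁ * g₂) :
    g₃.trace = 0 ∧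
    g₃ * g₃ = (-(y / a)) • (1 : Matrix (Fin 2) (Fin 2) ℝ) ∧
    g₁ * g₂ * g₃ * T = (-(y / a)) • (1 : Matrix (Fin 2) (Fin 2) ℝ) := by
  have hE1 : 2 * b * x + x - b - 1 / a - b ^ 2 - y - x ^ 2 = 0 := by
    rw [hx, hy]; linear_combination (-(1/4) : ℝ) * hY
  have htr : g₃.trace = 0 := by
    rw [hg₃, hT, hg₁, hg₂]
    simp [Matrix.trace_fin_two, Matrix.mul_apply, Fin.sum_univ_two]
    linear_combination hE1
  have hdet : g₃.det = y / a := by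
    rw [hg₃, Matrix.det_mul, Matrix.det_mul, hT, hg₁, hg₂]
    simp [Matrix.det_fin_two_of]
    field_simp
    ring
  have hsq : g₃ * g₃ = (-(y / a)) • (1 : Matrix (Fin 2) (Fin 2) ℝ) := by
    rw [fin_two_CH, htr, hdet]
    simp
  refine ⟨htr, hsq, ?_⟩
  have hTi : !![1, -1; 0, 1] * T = 1 := by
    rw [hT]; ext i j; fin_cases i <;> fin_cases j <;>
      simp [Matrix.mul_apply, Fin.sum_univ_two, Matrix.one_apply]
  have h12 : g₁ * g₂ = !![1, -1; 0, 1] * g₃ := by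
    rw [hg₃, ← Matrix.mul_assoc, ← Matrix.mul_assoc, hTi, Matrix.one_mul]
  calc g₁ * g₂ * g₃ * T = !![1, -1; 0, 1] * (g₃ * g₃) * T := by
        rw [h12, Matrix.mul_assoc _ g₃ g₃]
    _ = (-(y / a)) • (!![1, -1; 0, 1] * T) := by
        rw [hsq, Matrix.mul_smul, Matrix.smul_mul, Matrix.mul_one]
    _ = (-(y / a)) • (1 : Matrix (Fin 2) (Fin 2) ℝ) := by rw [hTi]
end

section
/- Let a, b, c, d, x, y, z be real numbers with a ≠ −1/2, c ≠ 1/2, satisfying x² = (a − b)·((1/2 + a)·(−1/2 + c) + d²)/(1/2 − c), y² = d²·(a − b)·(b − c)/((1/2 + a)·(1/2 − c)), and z² = (b − c)·((1/2 + a)·(−1/2 + c) + d²)/(1/2 + a). Then the matrix product r_2(a, x)·r_2(b, y)·r_2(c, z)·r_2(1/2, d)·T is a real scalar multiple of the 2×2 identity matrix; hence the generators g₁ = r_2(a,x), g₂ = r_2(b,y), g₃ = r_2(c,z), g₄ = r_2(1/2,d) of Γ_{2,2,2,2}(a,b,c,d) satisfy the relation g₁g₂g₃g₄T = 1 in PSL(2,ℝ).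 -/
set_option maxHeartbeats 1000000

/-- With a ≠ −1/2, c ≠ 1/2 and x, y, z satisfying the stated quadratic
relations, the product r_2(a,x)·r_2(b,y)·r_2(c,z)·r_2(1/2,d)·T is a real scalar
multiple of the identity matrix; hence the generators of Γ_{2,2,2,2}(a,b,c,d)
satisfy g₁g₂g₃g₄T = 1 in PSL(2,ℝ). -/
theorem Gamma2222_relation (a b c d x y z : ℝ)
    (ha : a ≠ -(1 / 2)) (hc : c ≠ 1 / 2)
    (hx : x ^ 2 = (a - b) * ((1 / 2 + a) * (-(1 / 2) + c) + d ^ 2) / (1 / 2 - c))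
    (hy : y ^ 2 = d ^ 2 * (a - b) * (b - c) / ((1 / 2 + a) * (1 / 2 - c)))
    (hz : z ^ 2 = (b - c) * ((1 / 2 + a) * (-(1 / 2) + c) + d ^ 2) / (1 / 2 + a)) :
    ∃ r : ℝ, r2 a x * r2 b y * r2 c z * r2 (1 / 2) d * !![1, 1; 0, 1]
      = r • (1 : Matrix (Fin 2) (Fin 2) ℝ) := by
  have ha' : (1/2 + a : ℝ) ≠ 0 := fun h => ha (by linarith)
  have hc' : (1/2 - c : ℝ) ≠ 0 := fun h => hc (by linarith)
  rw [eq_div_iff hc'] at hx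
  rw [eq_div_iff (mul_ne_zero ha' hc')] at hy
  rw [eq_div_iff ha'] at hz
  have hq : ((1/2 - c)^2 * (1/2 + a)^2 : ℝ) ≠ 0 :=
    mul_ne_zero (pow_ne_zero 2 hc') (pow_ne_zero 2 ha')
  have kg00 : ((1/4:ℝ)*(y^2) + (x^2)*(z^2) - d^2*(y^2) + (-1/2:ℝ)*c*(y^2) + (-1/2:ℝ)*c*(x^2) + c^2*(x^2) + (1/2:ℝ)*b*(z^2) + (1/2:ℝ)*b*(x^2) + (-1/4:ℝ)*b*c - b*c*(x^2) + b*c*d^2 + (1/2:ℝ)*b*c^2 + (1/4:ℝ)*b^2 - b^2*d^2 + (-1/2:ℝ)*b^2*c + (-1/2:ℝ)*a*(z^2) + (-1/2:ℝ)*a*(y^2) + (1/4:ℝ)*a*c + a*c*(y^2) - a*c*d^2 + (-1/2:ℝ)*a*c^2 + (-1/4:ℝ)*a*b - a*b*(z^2) + a*b*d^2 + a*b*c - a*b*c^2 + (-1/2:ℝ)*a*b^2 + a*b^2*c + a^2*(z^2) + (-1/2:ℝ)*a^2*c + a^2*c^2 + (1/2:ℝ)*a^2*b - a^2*b*c) =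 0 := by
    have key : ((1/4:ℝ)*(y^2) + (x^2)*(z^2) - d^2*(y^2) + (-1/2:ℝ)*c*(y^2) + (-1/2:ℝ)*c*(x^2) + c^2*(x^2) + (1/2:ℝ)*b*(z^2) + (1/2:ℝ)*b*(x^2) + (-1/4:ℝ)*b*c - b*c*(x^2) + b*c*d^2 + (1/2:ℝ)*b*c^2 + (1/4:ℝ)*b^2 - b^2*d^2 + (-1/2:ℝ)*b^2*c + (-1/2:ℝ)*a*(z^2) + (-1/2:ℝ)*a*(y^2) + (1/4:ℝ)*a*c + a*c*(y^2) - a*c*d^2 + (-1/2:ℝ)*a*c^2 + (-1/4:ℝ)*a*b - a*b*(z^2) + a*b*d^2 + a*b*c - a*b*c^2 + (-1/2:ℝ)*a*b^2 + a*b^2*c + a^2*(z^2) + (-1/2:ℝ)*a^2*c + a^2*c^2 + (1/2:ℝ)*a^2*b - a^2*b*c) * ((1/2 - c)^2 * (1/2 + a)^2) = 0 := by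
      linear_combination ((1/8:ℝ)*(z^2) + (-1/16:ℝ)*c + (-1/4:ℝ)*c*(z^2) + (1/4:ℝ)*c^2 + (-1/4:ℝ)*c^3 + (1/16:ℝ)*b + (-1/4:ℝ)*b*c + (1/4:ℝ)*b*c^2 + (1/2:ℝ)*a*(z^2) + (-1/4:ℝ)*a*c - a*c*(z^2) + a*c^2 - a*c^3 + (1/4:ℝ)*a*b - a*b*c + a*b*c^2 + (1/2:ℝ)*a^2*(z^2) + (-1/4:ℝ)*a^2*c - a^2*c*(z^2) + a^2*c^2 - a^2*c^3 + (1/4:ℝ)*a^2*b - a^2*b*c + a^2*b*c^2) * hx + ((1/16:ℝ) + (-1/4:ℝ)*d^2 + (-1/4:ℝ)*c + (1/2:ℝ)*c*d^2 + (1/4:ℝ)*c^2 + (-1/2:ℝ)*a*d^2 + a*c*d^2 + (-1/4:ℝ)*a^2 + a^2*c - a^2*c^2) * hy + ((1/8:ℝ)*b + (-1/4:ℝ)*b*d^2 + (-1/2:ℝ)*b*c + (1/2:ℝ)*b*c*d^2 + (1/2:ℝ)*b*c^2 + (-1/8:ℝ)*a + (1/4:ℝ)*a*d^2 + (1/2:ℝ)*a*c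 + (-1/2:ℝ)*a*c*d^2 + (-1/2:ℝ)*a*c^2 + (1/4:ℝ)*a*b + (-1/2:ℝ)*a*b*d^2 - a*b*c + a*b*c*d^2 + a*b*c^2 + (-1/4:ℝ)*a^2 + (1/2:ℝ)*a^2*d^2 + a^2*c - a^2*c*d^2 - a^2*c^2) * hz
    exact (mul_eq_zero.mp key).resolve_right hq
  have kg01 : ((1/2:ℝ)*(x^2)*(z^2) + (-1/4:ℝ)*c*(x^2) + c*d^2*(x^2) + (1/2:ℝ)*c^2*(x^2) + (1/4:ℝ)*b*(x^2) - b*d^2*(x^2) + (-1/2:ℝ)*b*c*(x^2) + (-1/4:ℝ)*a*(y^2) + a*d^2*(y^2) + (1/2:ℝ)*a*c*(y^2) + (-1/2:ℝ)*a*b*(z^2) + (1/4:ℝ)*a*b*c - a*b*c*d^2 + (-1/2:ℝ)*a*b*c^2 + (-1/4:ℝ)*a*b^2 + a*b^2*d^2 + (1/2:ℝ)*a*b^2*c + (1/2:ℝ)*a^2*(z^2) + (-1/4:ℝ)*a^2*c + a^2*c*d^2 + (1/2:ℝ)*a^2*c^2 + (1/4:ℝ)*a^2*b - a^2*b*d^2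 + (-1/2:ℝ)*a^2*b*c) = 0 := by
    have key : ((1/2:ℝ)*(x^2)*(z^2) + (-1/4:ℝ)*c*(x^2) + c*d^2*(x^2) + (1/2:ℝ)*c^2*(x^2) + (1/4:ℝ)*b*(x^2) - b*d^2*(x^2) + (-1/2:ℝ)*b*c*(x^2) + (-1/4:ℝ)*a*(y^2) + a*d^2*(y^2) + (1/2:ℝ)*a*c*(y^2) + (-1/2:ℝ)*a*b*(z^2) + (1/4:ℝ)*a*b*c - a*b*c*d^2 + (-1/2:ℝ)*a*b*c^2 + (-1/4:ℝ)*a*b^2 + a*b^2*d^2 + (1/2:ℝ)*a*b^2*c + (1/2:ℝ)*a^2*(z^2) + (-1/4:ℝ)*a^2*c + a^2*c*d^2 + (1/2:ℝ)*a^2*c^2 + (1/4:ℝ)*a^2*b - a^2*b*d^2 + (-1/2:ℝ)*a^2*b*c) * ((1/2 - c)^2 * (1/2 + a)^2) = 0 := by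
      linear_combination ((1/16:ℝ)*(z^2) + (-1/32:ℝ)*c + (-1/8:ℝ)*c*(z^2) + (1/8:ℝ)*c*d^2 + (1/8:ℝ)*c^2 + (-1/4:ℝ)*c^2*d^2 + (-1/8:ℝ)*c^3 + (1/32:ℝ)*b + (-1/8:ℝ)*b*d^2 + (-1/8:ℝ)*b*c + (1/4:ℝ)*b*c*d^2 + (1/8:ℝ)*b*c^2 + (1/4:ℝ)*a*(z^2) + (-1/8:ℝ)*a*c + (-1/2:ℝ)*a*c*(z^2) + (1/2:ℝ)*a*c*d^2 + (1/2:ℝ)*a*c^2 - a*c^2*d^2 + (-1/2:ℝ)*a*c^3 + (1/8:ℝ)*a*b + (-1/2:ℝ)*a*b*d^2 + (-1/2:ℝ)*a*b*c + a*b*c*d^2 + (1/2:ℝ)*a*b*c^2 + (1/4:ℝ)*a^2*(z^2) + (-1/8:ℝ)*a^2*c + (-1/2:ℝ)*a^2*c*(z^2) + (1/2:ℝ)*a^2*c*d^2 + (1/2:ℝ)*a^2*c^2 - a^2*c^2*d^2 + (-1/2:ℝ)*a^2*c^3 + (1/8:ℝ)*a^2*b + (-1/2:ℝ)*a^2*b*d^2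 + (-1/2:ℝ)*a^2*b*c + a^2*b*c*d^2 + (1/2:ℝ)*a^2*b*c^2) * hx + ((-1/16:ℝ)*a + (1/4:ℝ)*a*d^2 + (1/4:ℝ)*a*c + (-1/2:ℝ)*a*c*d^2 + (-1/4:ℝ)*a*c^2 + (-1/8:ℝ)*a^2 + (1/2:ℝ)*a^2*d^2 + (1/2:ℝ)*a^2*c - a^2*c*d^2 + (-1/2:ℝ)*a^2*c^2) * hy + ((1/32:ℝ)*b + (-1/8:ℝ)*b*d^2 + (-1/8:ℝ)*b*c + (1/4:ℝ)*b*c*d^2 + (1/8:ℝ)*b*c^2 + (-1/32:ℝ)*a + (1/8:ℝ)*a*d^2 + (1/8:ℝ)*a*c + (-1/4:ℝ)*a*c*d^2 + (-1/8:ℝ)*a*c^2 + (1/16:ℝ)*a*b + (-1/4:ℝ)*a*b*d^2 + (-1/4:ℝ)*a*b*c + (1/2:ℝ)*a*b*c*d^2 + (1/4:ℝ)*a*b*c^2 + (-1/16:ℝ)*a^2 + (1/4:ℝ)*a^2*d^2 + (1/4:ℝ)*a^2*c + (-1/2:ℝ)*a^2*c*d^2 + (-1/4:ℝ)*a^2*c^2)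 * hz
    exact (mul_eq_zero.mp key).resolve_right hq
  have kg10 : ((-1/2:ℝ)*(y^2) + c*(y^2) - b*(z^2) + (1/2:ℝ)*b*c - b*c^2 + (-1/2:ℝ)*b^2 + b^2*c + a*(z^2) + (-1/2:ℝ)*a*c + a*c^2 + (1/2:ℝ)*a*b - a*b*c) = 0 := by
    have key : ((-1/2:ℝ)*(y^2) + c*(y^2) - b*(z^2) + (1/2:ℝ)*b*c - b*c^2 + (-1/2:ℝ)*b^2 + b^2*c + a*(z^2) + (-1/2:ℝ)*a*c + a*c^2 + (1/2:ℝ)*a*b - a*b*c) * ((1/2 - c)^2 * (1/2 + a)^2) = 0 := by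
      linear_combination ((-1/8:ℝ) + (1/2:ℝ)*c + (-1/2:ℝ)*c^2 + (-1/4:ℝ)*a + a*c - a*c^2) * hy + ((-1/8:ℝ)*b + (1/2:ℝ)*b*c + (-1/2:ℝ)*b*c^2 + (1/8:ℝ)*a + (-1/2:ℝ)*a*c + (1/2:ℝ)*a*c^2 + (-1/4:ℝ)*a*b + a*b*c - a*b*c^2 + (1/4:ℝ)*a^2 - a^2*c + a^2*c^2) * hz
    exact (mul_eq_zero.mp key).resolve_right hq
  refine ⟨(-1/4:ℝ)*(y^2) + d^2*(y^2) + (1/2:ℝ)*c*(y^2) + (-1/2:ℝ)*b*(z^2) + (1/4:ℝ)*b*c - b*c*d^2 + (-1/2:ℝ)*b*c^2 + (-1/4:ℝ)*b^2 + b^2*d^2 + (1/2:ℝ)*b^2*c + (1/2:ℝ)*a*(z^2) + (-1/4:ℝ)*a*c + a*c*d^2 + (1/2:ℝ)*a*c^2 + (1/4:ℝ)*a*b - a*b*d^2 + (-1/2:ℝ)*a*b*c, ?_⟩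
  have hone : ((-1/4:ℝ)*(y^2) + d^2*(y^2) + (1/2:ℝ)*c*(y^2) + (-1/2:ℝ)*b*(z^2) + (1/4:ℝ)*b*c - b*c*d^2 + (-1/2:ℝ)*b*c^2 + (-1/4:ℝ)*b^2 + b^2*d^2 + (1/2:ℝ)*b^2*c + (1/2:ℝ)*a*(z^2) + (-1/4:ℝ)*a*c + a*c*d^2 + (1/2:ℝ)*a*c^2 + (1/4:ℝ)*a*b - a*b*d^2 + (-1/2:ℝ)*a*b*c) • (1 : Matrix (Fin 2) (Fin 2) ℝ)
      = !![((-1/4:ℝ)*(y^2) + d^2*(y^2) + (1/2:ℝ)*c*(y^2) + (-1/2:ℝ)*b*(z^2) + (1/4:ℝ)*b*c - b*c*d^2 + (-1/2:ℝ)*b*c^2 + (-1/4:ℝ)*b^2 + b^2*d^2 + (1/2:ℝ)*b^2*c + (1/2:ℝ)*a*(z^2) + (-1/4:ℝ)*a*c + a*c*d^2 + (1/2:ℝ)*a*c^2 + (1/4:ℝ)*a*b - a*b*d^2 + (-1/2:ℝ)*a*b*c), 0; 0, ((-1/4:ℝ)*(y^2) + d^2*(y^2) + (1/2:ℝ)*c*(y^2)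 + (-1/2:ℝ)*b*(z^2) + (1/4:ℝ)*b*c - b*c*d^2 + (-1/2:ℝ)*b*c^2 + (-1/4:ℝ)*b^2 + b^2*d^2 + (1/2:ℝ)*b^2*c + (1/2:ℝ)*a*(z^2) + (-1/4:ℝ)*a*c + a*c*d^2 + (1/2:ℝ)*a*c^2 + (1/4:ℝ)*a*b - a*b*d^2 + (-1/2:ℝ)*a*b*c)] := by
    rw [Matrix.one_fin_two]
    ext i j
    fin_cases i <;> fin_cases j <;> simp
  rw [hone]
  simp only [r2, Matrix.mul_fin_two]
  ext i j
  fin_cases i <;> fin_cases j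
  · simp; linear_combination kg00
  · simp; linear_combination kg01
  · simp; linear_combination kg10
  · simp; ring
end

section
/- For the group Γ_{2,2,2}(a,b) with parameters a = 6, b = 0, the defining quantities are Y = 1/3, x = 1/3, and y = 1/18, and the generators satisfy the matrix identities 6·r_2(0, 1/√6) = [[0, 1], [−6, 0]] and 6·r_2(1/3, 1/√18) = [[−2, 1], [−6, 2]]; the first matrix has determinant 6 (representing the Fricke involution of level 6) and the second has determinant 2, and both have lower-left entry divisible by 6 (representing Atkin–Lehner involutions attached to Γ₀(6)). -/
/-- For Γ_{2,2,2}(6,0): Y = 1/3, x = 1/3, y = 1/18;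
6·r_2(0, 1/√6) = [[0,1],[−6,0]] and 6·r_2(1/3, 1/√18) = [[−2,1],[−6,2]]; the first
matrix has determinant 6 (the Fricke involution of level 6) and the second has
determinant 2, and both have lower-left entry divisible by 6 (Atkin–Lehner
involutions attached to Γ₀(6)). -/
theorem Gamma222_six :
    Real.sqrt (4 / (6 : ℝ) ^ 2 + 0 ^ 2) = 1 / 3 ∧
    (2 / (6 : ℝ) + 0 + Real.sqrt (4 / (6 : ℝ) ^ 2 + 0 ^ 2)) / 2 = 1 / 3 ∧
    (-(4 / (6 : ℝ) ^ 2)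
        + (1 - 2 / 6 + 0) * (-0 + Real.sqrt (4 / (6 : ℝ) ^ 2 + 0 ^ 2))) / 2 = 1 / 18 ∧
    (6 : ℝ) • r2 0 (1 / Real.sqrt 6) = !![0, 1; -6, 0] ∧
    (6 : ℝ) • r2 (1 / 3) (1 / Real.sqrt 18) = !![-2, 1; -6, 2] ∧
    (!![0, 1; -6, 0] : Matrix (Fin 2) (Fin 2) ℤ).det = 6 ∧
    (!![-2, 1; -6, 2] : Matrix (Fin 2) (Fin 2) ℤ).det = 2 ∧
    (6 : ℤ) ∣ (!![0, 1; -6, 0] : Matrix (Fin 2) (Fin 2) ℤ) 1 0 ∧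
    (6 : ℤ) ∣ (!![-2, 1; -6, 2] : Matrix (Fin 2) (Fin 2) ℤ) 1 0 := by
  have hY : Real.sqrt (4 / (6 : ℝ) ^ 2 + 0 ^ 2) = 1 / 3 := by
    rw [show (4 / (6 : ℝ) ^ 2 + 0 ^ 2) = (1/3)^2 by norm_num]
    exact Real.sqrt_sq (by norm_num)
  have h6 : (1 / Real.sqrt 6) ^ 2 = 1 / 6 := by
    rw [div_pow, Real.sq_sqrt (by norm_num : (6:ℝ) ≥ 0)]; norm_num
  have h18 : (1 / Real.sqrt 18) ^ 2 = 1 / 18 := by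
    rw [div_pow, Real.sq_sqrt (by norm_num : (18:ℝ) ≥ 0)]; norm_num
  refine ⟨hY, by rw [hY]; norm_num, by rw [hY]; norm_num, ?_, ?_, ?_, ?_, ?_, ?_⟩
  · unfold r2
    ext i j
    fin_cases i <;> fin_cases j <;>
      simp [Matrix.smul_apply, h6] <;> norm_num [h6]
  · unfold r2
    ext i j
    fin_cases i <;> fin_cases j <;>
      simp [Matrix.smul_apply, h18] <;> norm_num [h18]
  · simp [Matrix.det_fin_two_of]
  · simp [Matrix.det_fin_two_of]
  · simp
  · simp
end

section
/- For the group Γ_{2,2,2}(a,b) with parameters a = 8, b = 0, the defining quantities are Y = 1/4, x = 1/4, and y = 1/16 (so √y = 1/4), and the generators satisfy the matrix identities 8·r_2(0, 1/√8) = [[0, 1], [−8, 0]] and 8·r_2(1/4, 1/4) = [[−2, 1], [−8, 2]]; the first matrix has determinant 8 (representing the Fricke involution of level 8) and the second has determinant 4, and both have lower-left entry divisible by 8 (representing involutions normalizing Γ₀(8)). -/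
lemma sqrt116 : Real.sqrt (1 / 16) = 1 / 4 := by
  rw [show (1/16 : ℝ) = (1/4)^2 by norm_num, Real.sqrt_sq (by norm_num)]

/-- For Γ_{2,2,2}(8,0): Y = 1/4, x = 1/4, y = 1/16 (so √y = 1/4);
8·r_2(0, 1/√8) = [[0,1],[−8,0]] and 8·r_2(1/4, 1/4) = [[−2,1],[−8,2]]; the first
matrix has determinant 8 (the Fricke involution of level 8) and the second has
determinant 4, and both have lower-left entry divisible by 8 (involutions
normalizing Γ₀(8)). -/
theorem Gamma222_eight :
    Real.sqrt (4 / (8 : ℝ) ^ 2 + 0 ^ 2) = 1 / 4 ∧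
    (2 / (8 : ℝ) + 0 + Real.sqrt (4 / (8 : ℝ) ^ 2 + 0 ^ 2)) / 2 = 1 / 4 ∧
    (-(4 / (8 : ℝ) ^ 2)
        + (1 - 2 / 8 + 0) * (-0 + Real.sqrt (4 / (8 : ℝ) ^ 2 + 0 ^ 2))) / 2 = 1 / 16 ∧
    Real.sqrt (1 / 16) = 1 / 4 ∧
    (8 : ℝ) • r2 0 (1 / Real.sqrt 8) = !![0, 1; -8, 0] ∧
    (8 : ℝ) • r2 (1 / 4) (1 / 4) = !![-2, 1; -8, 2] ∧
    (!![0, 1; -8, 0] : Matrix (Fin 2) (Fin 2) ℤ).det = 8 ∧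
    (!![-2, 1; -8, 2] : Matrix (Fin 2) (Fin 2) ℤ).det = 4 ∧
    (8 : ℤ) ∣ (!![0, 1; -8, 0] : Matrix (Fin 2) (Fin 2) ℤ) 1 0 ∧
    (8 : ℤ) ∣ (!![-2, 1; -8, 2] : Matrix (Fin 2) (Fin 2) ℤ) 1 0 := by
  have h1 : Real.sqrt (4 / (8 : ℝ) ^ 2 + 0 ^ 2) = 1 / 4 := by
    rw [show (4 / (8:ℝ)^2 + 0^2) = 1/16 by norm_num]; exact sqrt116
  have h8 : (1 / Real.sqrt 8) ^ 2 = (1 : ℝ) / 8 := by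
    rw [div_pow, Real.sq_sqrt (by norm_num)]; norm_num
  refine ⟨h1, by rw [h1]; norm_num, by rw [h1]; norm_num, sqrt116, ?_, ?_, ?_, ?_, ?_, ?_⟩
  · ext i j; fin_cases i <;> fin_cases j <;>
      simp [r2, Matrix.smul_apply, h8] <;> norm_num
  · ext i j; fin_cases i <;> fin_cases j <;>
      simp [r2, Matrix.smul_apply] <;> norm_num
  · simp [Matrix.det_fin_two_of]
  · simp [Matrix.det_fin_two_of]
  · simp
  · simp
end

section
/- For the group Γ_{2,2,2,2}(a,b,c,d) with parameters (a, b, c, d) = (−1/3, 0, 1/3, 1/(2√11)), the defining quantities satisfy x² = z² = 1/99 and y² = 1/11 (so x = z = 1/√99 and y = 1/√11 with the positive square roots), and the four elliptic generators satisfy the matrix identities 33·r_2(−1/3, 1/√99) = [[11, 4], [−33, −11]], 11·r_2(0, 1/√11) = [[0, 1], [−11, 0]], 33·r_2(1/3, 1/√99) = [[−11, 4], [−33, 11]], and 22·r_2(1/2, 1/(2√11)) = [[−11, 6], [−22, 11]]; each of these four integer matrices has determinant 11 and lower-left entry divisible by 11 (representing involutions of Fricke type normalizing Γ₀(11)). 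-/
/-- For Γ_{2,2,2,2}(−1/3, 0, 1/3, 1/(2√11)): the defining formulas give
x² = z² = 1/99 and y² = 1/11 (so x = z = 1/√99 and y = 1/√11), and
33·r_2(−1/3, 1/√99) = [[11,4],[−33,−11]], 11·r_2(0, 1/√11) = [[0,1],[−11,0]],
33·r_2(1/3, 1/√99) = [[−11,4],[−33,11]], 22·r_2(1/2, 1/(2√11)) = [[−11,6],[−22,11]];
each integer matrix has determinant 11 and lower-left entry divisible by 11
(involutions of Fricke type normalizing Γ₀(11)). -/
theorem Gamma2222_eleven :
    ((-(1 / 3) : ℝ) - 0) * ((1 / 2 + -(1 / 3)) * (-(1 / 2) + 1 / 3)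
        + (1 / (2 * Real.sqrt 11)) ^ 2) / (1 / 2 - 1 / 3) = 1 / 99 ∧
    ((1 / (2 * Real.sqrt 11)) ^ 2 * ((-(1 / 3) : ℝ) - 0) * ((0 : ℝ) - 1 / 3))
        / ((1 / 2 + -(1 / 3)) * (1 / 2 - 1 / 3)) = 1 / 11 ∧
    (((0 : ℝ) - 1 / 3) * ((1 / 2 + -(1 / 3)) * (-(1 / 2) + 1 / 3)
        + (1 / (2 * Real.sqrt 11)) ^ 2)) / (1 / 2 + -(1 / 3)) = 1 / 99 ∧
    (33 : ℝ) • r2 (-(1 / 3)) (1 / Real.sqrt 99) = !![11, 4; -33, -11] ∧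
    (11 : ℝ) • r2 0 (1 / Real.sqrt 11) = !![0, 1; -11, 0] ∧
    (33 : ℝ) • r2 (1 / 3) (1 / Real.sqrt 99) = !![-11, 4; -33, 11] ∧
    (22 : ℝ) • r2 (1 / 2) (1 / (2 * Real.sqrt 11)) = !![-11, 6; -22, 11] ∧
    (!![11, 4; -33, -11] : Matrix (Fin 2) (Fin 2) ℤ).det = 11 ∧
    (!![0, 1; -11, 0] : Matrix (Fin 2) (Fin 2) ℤ).det = 11 ∧
    (!![-11, 4; -33, 11] : Matrix (Fin 2) (Fin 2) ℤ).det = 11 ∧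
    (!![-11, 6; -22, 11] : Matrix (Fin 2) (Fin 2) ℤ).det = 11 ∧
    (11 : ℤ) ∣ (!![11, 4; -33, -11] : Matrix (Fin 2) (Fin 2) ℤ) 1 0 ∧
    (11 : ℤ) ∣ (!![0, 1; -11, 0] : Matrix (Fin 2) (Fin 2) ℤ) 1 0 ∧
    (11 : ℤ) ∣ (!![-11, 4; -33, 11] : Matrix (Fin 2) (Fin 2) ℤ) 1 0 ∧
    (11 : ℤ) ∣ (!![-11, 6; -22, 11] : Matrix (Fin 2) (Fin 2) ℤ) 1 0 := by
  have h11 : Real.sqrt 11 ^ 2 = 11 := Real.sq_sqrt (by norm_num)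
  have h99 : Real.sqrt 99 ^ 2 = 99 := Real.sq_sqrt (by norm_num)
  have h11p : Real.sqrt 11 > 0 := Real.sqrt_pos.mpr (by norm_num)
  have h99p : Real.sqrt 99 > 0 := Real.sqrt_pos.mpr (by norm_num)
  refine ⟨?_, ?_, ?_, ?_, ?_, ?_, ?_, ?_, ?_, ?_, ?_, ?_, ?_, ?_, ?_⟩
  · field_simp; nlinarith [h11]
  · field_simp; nlinarith [h11]
  · field_simp; nlinarith [h11]
  · unfold r2; ext i j; fin_cases i <;> fin_cases j <;>
      simp [Matrix.smul_apply] <;> field_simp <;> nlinarith [h99]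
  · unfold r2; ext i j; fin_cases i <;> fin_cases j <;>
      simp [Matrix.smul_apply] <;> field_simp <;> nlinarith [h11]
  · unfold r2; ext i j; fin_cases i <;> fin_cases j <;>
      simp [Matrix.smul_apply] <;> field_simp <;> nlinarith [h99]
  · unfold r2; ext i j; fin_cases i <;> fin_cases j <;>
      simp [Matrix.smul_apply] <;> field_simp <;> nlinarith [h11]
  · simp [Matrix.det_fin_two_of]
  · simp [Matrix.det_fin_two_of]
  · simp [Matrix.det_fin_two_of]
  · simp [Matrix.det_fin_two_of]
  · decide
  · decide
  · decide
  · decide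
end
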